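/- If a finite simple graph G is 0-1 strongly EFX-orientable, then for every matching M in G, the subgraph of G induced by the set of vertices covered by M contains an independent set of size |M|. -/

import Mathlib

open SimpleGraph
open scoped Classical

variable {V : Type*}

def bundleSet (G : SimpleGraph V) (head : Sym2 V → V) (v : V) : Set (Sym2 V) :=
  {e ∈ G.edgeSet | head e = v}

def IsEFXOrientation (G : SimpleGraph V) (f : V → Set (Sym2 V) → NNReal)
    (head : Sym2 V → V) : Prop :=
  (∀ e ∈ G.edgeSet, head e ∈ e) ∧
  ∀ a b : V, ∀ g ∈ bundleSet G head b,
    f a (bundleSet G head b \ {g}) ≤ f a (bundleSet G head a)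

def StronglyEFXOrientable [Fintype V] (G : SimpleGraph V) : Prop :=
  ∀ f : V → Set (Sym2 V) → NNReal,
    (∀ a, Monotone (f a)) →
    (∀ a X, f a X = f a (X ∩ G.incidenceSet a)) →
    ∃ head : Sym2 V → V, IsEFXOrientation G f head

noncomputable def bundle [Fintype V] (G : SimpleGraph V) (head : Sym2 V → V) (v : V) :
    Finset (Sym2 V) :=
  Finset.univ.filter fun e => e ∈ G.edgeSet ∧ head e = v

def IsEFX01Orientation [Fintype V] (G : SimpleGraph V) (w : V → Sym2 V → ℕ)
    (head : Sym2 V → V) : Prop :=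
  (∀ e ∈ G.edgeSet, head e ∈ e) ∧
  ∀ a b : V, ∀ g ∈ bundle G head b,
    ∑ e ∈ (bundle G head b).erase g, w a e ≤ ∑ e ∈ bundle G head a, w a e

def ZeroOneStronglyEFXOrientable [Fintype V] (G : SimpleGraph V) : Prop :=
  ∀ w : V → Sym2 V → ℕ, (∀ a e, w a e ≤ 1) → (∀ a e, a ∉ e → w a e = 0) →
    ∃ head : Sym2 V → V, IsEFX01Orientation G w head

def IndepOn (G : SimpleGraph V) (s : Set V) : Prop :=
  ∀ a ∈ s, ∀ b ∈ s, ¬ G.Adj a b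

/-- A matching: a set of edges of `G` that are pairwise vertex-disjoint. -/
def IsMatchingSet (G : SimpleGraph V) (M : Finset (Sym2 V)) : Prop :=
  (∀ e ∈ M, e ∈ G.edgeSet) ∧
  ∀ e ∈ M, ∀ f ∈ M, e ≠ f → ∀ v : V, ¬(v ∈ e ∧ v ∈ f)

/-!
Give each agent value 1 exactly for the matching edges at it, and take an EFX orientation.
A matching edge `e` must be the only edge oriented towards its head: the other endpoint of `e`
values its own bundle at 0, so it would envy the head's bundle with any other edge removed.
The heads of the matching edges are distinct since the edges are disjoint, and no two are
adjacent, since an edge between them would lie in one of their bundles.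
-/

theorem mem_bundle [Fintype V] {G : SimpleGraph V} {head : Sym2 V → V} {v : V} {e : Sym2 V} :
    e ∈ bundle G head v ↔ e ∈ G.edgeSet ∧ head e = v := by
  simp [bundle]

theorem IsMatchingSet.eq_of_mem_of_mem {G : SimpleGraph V} {M : Finset (Sym2 V)}
    (hM : IsMatchingSet G M) {e f : Sym2 V} (he : e ∈ M) (hf : f ∈ M) {v : V}
    (hve : v ∈ e) (hvf : v ∈ f) : e = f := by
  by_contra hne
  exact hM.2 e he f hf hne v ⟨hve, hvf⟩

noncomputable def matchingWeight (M : Finset (Sym2 V)) (x : V) (e : Sym2 V) : ℕ :=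
  if x ∈ e ∧ e ∈ M then 1 else 0

theorem matchingWeight_le_one (M : Finset (Sym2 V)) (x : V) (e : Sym2 V) :
    matchingWeight M x e ≤ 1 := by
  unfold matchingWeight
  split <;> simp

theorem matchingWeight_eq_zero_of_not_mem {M : Finset (Sym2 V)} {x : V} {e : Sym2 V}
    (hx : x ∉ e) : matchingWeight M x e = 0 :=
  if_neg fun h => hx h.1

section EFXOrientation

variable [Fintype V] {G : SimpleGraph V} {M : Finset (Sym2 V)} {head : Sym2 V → V}

theorem sum_matchingWeight_bundle_eq_zero (hM : IsMatchingSet G M) {e : Sym2 V} (he : e ∈ M)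
    {u : V} (hu : u ∈ e) (hhead : head e ≠ u) :
    ∑ x ∈ bundle G head u, matchingWeight M u x = 0 := by
  refine Finset.sum_eq_zero fun x hx => if_neg ?_
  rintro ⟨hux, hxM⟩
  obtain rfl := hM.eq_of_mem_of_mem hxM he hux hu
  exact hhead (mem_bundle.1 hx).2

theorem eq_of_mem_bundle_head (hM : IsMatchingSet G M)
    (hEFX : IsEFX01Orientation G (matchingWeight M) head) {e g : Sym2 V} (he : e ∈ M)
    (hg : g ∈ bundle G head (head e)) : g = e := by
  by_contra hge
  have heE : e ∈ G.edgeSet := hM.1 e he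
  have hhead : head e ∈ e := hEFX.1 e heE
  obtain ⟨u, hu, hhead_u⟩ : ∃ u ∈ e, head e ≠ u :=
    ⟨_, Sym2.other_mem hhead, (Sym2.other_ne (G.not_isDiag_of_mem_edgeSet heE) hhead).symm⟩
  have he_rest : e ∈ (bundle G head (head e)).erase g :=
    Finset.mem_erase.2 ⟨Ne.symm hge, mem_bundle.2 ⟨heE, rfl⟩⟩
  have envy : 1 ≤ ∑ x ∈ (bundle G head (head e)).erase g, matchingWeight M u x :=
    calc 1 = matchingWeight M u e := by simp [matchingWeight, hu, he]
      _ ≤ _ := Finset.single_le_sum (fun _ _ => Nat.zero_le _) he_rest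
  have efx := hEFX.2 u (head e) g hg
  rw [sum_matchingWeight_bundle_eq_zero hM he hu hhead_u] at efx
  omega

theorem mem_of_adj_head (hM : IsMatchingSet G M)
    (hEFX : IsEFX01Orientation G (matchingWeight M) head) {e : Sym2 V} (he : e ∈ M) {v : V}
    (hadj : G.Adj (head e) v) (hv : head s(head e, v) = head e) : v ∈ e := by
  rw [← eq_of_mem_bundle_head hM hEFX he (mem_bundle.2 ⟨hadj, hv⟩)]
  exact Sym2.mem_mk_right _ _

theorem not_adj_head (hM : IsMatchingSet G M)
    (hEFX : IsEFX01Orientation G (matchingWeight M) head) {e e' : Sym2 V} (he : e ∈ M)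
    (he' : e' ∈ M) : ¬ G.Adj (head e) (head e') := by
  intro hadj
  have hne : e ≠ e' := by
    rintro rfl
    exact G.irrefl hadj
  rcases Sym2.mem_iff.1 (hEFX.1 _ hadj) with h | h
  · exact hne (hM.eq_of_mem_of_mem he he' (mem_of_adj_head hM hEFX he hadj h)
      (hEFX.1 e' (hM.1 e' he')))
  · rw [Sym2.eq_swap] at h
    exact hne (hM.eq_of_mem_of_mem he he' (hEFX.1 e (hM.1 e he))
      (mem_of_adj_head hM hEFX he' hadj.symm h))

end EFXOrientation

/-- If `G` is 0-1 strongly EFX-orientable, then for every matching `M` in `G`,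
the subgraph induced by the vertices covered by `M` contains an independent set of size `|M|`. -/
theorem matching_condition_of_zeroOne_stronglyEFXOrientable [Fintype V] (G : SimpleGraph V)
    (h : ZeroOneStronglyEFXOrientable G) :
    ∀ M : Finset (Sym2 V), IsMatchingSet G M →
      ∃ I : Finset V, I.card = M.card ∧ (∀ x ∈ I, ∃ e ∈ M, x ∈ e) ∧
        ∀ a ∈ I, ∀ b ∈ I, ¬ G.Adj a b := by
  intro M hM
  obtain ⟨head, hEFX⟩ := h (matchingWeight M) (matchingWeight_le_one M)
    fun _ _ hx => matchingWeight_eq_zero_of_not_mem hx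
  have hhead : ∀ e ∈ M, head e ∈ e := fun e he => hEFX.1 e (hM.1 e he)
  refine ⟨M.image head, Finset.card_image_of_injOn ?_, ?_, ?_⟩
  · intro e he e' he' hee'
    exact hM.eq_of_mem_of_mem he he' (hhead e he) (hee' ▸ hhead e' he')
  · simp only [Finset.mem_image]
    rintro _ ⟨e, he, rfl⟩
    exact ⟨e, he, hhead e he⟩
  · simp only [Finset.mem_image]
    rintro _ ⟨e, he, rfl⟩ _ ⟨e', he', rfl⟩
    exact not_adj_head hM hEFX he he'
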